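/- For w ∈ ℂ with Re w > 0, set ξ(w) := (1+w²)^{1/2} + log w − log(1 + (1+w²)^{1/2}), where (·)^{1/2} and log denote the principal branches (this is well defined since 1+w² ∉ (−∞,0] for Re w > 0). Then for every z ∈ ℂ with Re z > 0 and every ε ∈ (0,1), one has Re ξ(εz) < Re ξ(z). -/

import Mathlib

/-!
Olver's phase function satisfies `ξ'(w) = (1 + w²)^{1/2} / w`, so along the ray `t ↦ t z` one has
`d/dt Re ξ(t z) = Re (1 + t²z²)^{1/2} / t`. For `Re (t z) > 0` the point `1 + t²z²` lies in the slit
plane, where the principal square root has positive real part; hence `t ↦ Re ξ(t z)` is strictly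
increasing on `t > 0`, and `ε < 1` gives the claim.
-/

noncomputable def xiOlver (w : ℂ) : ℂ :=
  (1 + w ^ 2) ^ ((1 : ℂ) / 2) + Complex.log w - Complex.log (1 + (1 + w ^ 2) ^ ((1 : ℂ) / 2))

open Complex Set

namespace Complex

theorem one_add_sq_mem_slitPlane {w : ℂ} (hw : 0 < w.re) : 1 + w ^ 2 ∈ slitPlane := by
  rw [mem_slitPlane_iff]
  by_cases him : w.im = 0
  · left
    simp [sq, him]
    positivity
  · right
    simp only [add_im, one_im, sq, mul_im, zero_add]
    rw [mul_comm w.im, ← two_mul]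
    exact mul_ne_zero two_ne_zero (mul_ne_zero hw.ne' him)

theorem cpow_one_half_sq (x : ℂ) : (x ^ ((1 : ℂ) / 2)) ^ 2 = x := by
  simp [one_div]

theorem re_cpow_one_half_pos {x : ℂ} (hx : x ∈ slitPlane) : 0 < (x ^ ((1 : ℂ) / 2)).re := by
  rw [one_div, cpow_inv_two_re, Real.sqrt_pos]
  have : -x.re < ‖x‖ := by
    rcases mem_slitPlane_iff.mp hx with hre | him
    · linarith [norm_nonneg x]
    · exact (neg_le_abs x.re).trans_lt (abs_re_lt_norm.mpr him)
  linarith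

/-- `d/dt Re f(t z) = Re (t z f'(t z)) / t`. -/
theorem strictMonoOn_re_comp_ofReal_mul {f f' : ℂ → ℂ} {z : ℂ}
    (hf : ∀ t : ℝ, 0 < t → HasDerivAt f (f' (t * z)) (t * z))
    (hpos : ∀ t : ℝ, 0 < t → 0 < (t * z * f' (t * z)).re) :
    StrictMonoOn (fun t : ℝ => (f (t * z)).re) (Ioi 0) := by
  have hderiv : ∀ t : ℝ, 0 < t →
      HasDerivAt (fun t : ℝ => (f (t * z)).re) (f' (t * z) * z).re t := fun t ht =>
    ((hf t ht).comp (t : ℂ) (hasDerivAt_mul_const z)).real_of_complex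
  refine strictMonoOn_of_deriv_pos (convex_Ioi 0)
    (fun t ht => (hderiv t ht).continuousAt.continuousWithinAt) fun t ht => ?_
  rw [interior_Ioi] at ht
  rw [(hderiv t ht).deriv]
  have := hpos t ht
  rw [mul_assoc, re_ofReal_mul, mul_comm z] at this
  exact pos_of_mul_pos_right this ht.le

end Complex

theorem hasDerivAt_xiOlver {w : ℂ} (hw : 0 < w.re) :
    HasDerivAt xiOlver ((1 + w ^ 2) ^ ((1 : ℂ) / 2) / w) w := by
  have hw0 : w ≠ 0 := ne_of_apply_ne re hw.ne'
  have hu := one_add_sq_mem_slitPlane hw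
  set s := (1 + w ^ 2) ^ ((1 : ℂ) / 2) with hs
  have hs2 : s ^ 2 = 1 + w ^ 2 := cpow_one_half_sq _
  have hsre : 0 < s.re := re_cpow_one_half_pos hu
  have hs0 : s ≠ 0 := ne_of_apply_ne re hsre.ne'
  have h1s : 1 + s ∈ slitPlane := mem_slitPlane_iff.mpr (Or.inl (by rw [add_re, one_re]; linarith))
  have h1s0 : 1 + s ≠ 0 := slitPlane_ne_zero h1s
  have hds : HasDerivAt (fun x => (1 + x ^ 2) ^ ((1 : ℂ) / 2)) (w / s) w := by
    refine (((hasDerivAt_pow 2 w).const_add 1).cpow_const hu).congr_deriv ?_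
    rw [cpow_sub _ _ (slitPlane_ne_zero hu), cpow_one, ← hs, ← hs2]
    field_simp
    norm_num
  refine ((hds.add (hasDerivAt_log (Or.inl hw))).sub
    ((hasDerivAt_log h1s).comp w (hds.const_add 1))).congr_deriv ?_
  field_simp
  linear_combination -s * hs2

/-- For `z` in the right half-plane and `ε ∈ (0,1)` one has `Re ξ(εz) < Re ξ(z)`. -/
theorem xiOlver_re_lt (z : ℂ) (hz : 0 < z.re) (ε : ℝ) (hε0 : 0 < ε) (hε1 : ε < 1) :
    (xiOlver ((ε : ℂ) * z)).re < (xiOlver z).re := by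
  have hray : ∀ t : ℝ, 0 < t → 0 < ((t : ℂ) * z).re := fun t ht => by
    rw [re_ofReal_mul]; positivity
  have hmono := strictMonoOn_re_comp_ofReal_mul (f' := fun w => (1 + w ^ 2) ^ ((1 : ℂ) / 2) / w)
    (fun t ht => hasDerivAt_xiOlver (hray t ht))
    fun t ht => by
      have hw := hray t ht
      rw [mul_div_cancel₀ _ (ne_of_apply_ne re hw.ne')]
      exact re_cpow_one_half_pos (one_add_sq_mem_slitPlane hw)
  simpa using hmono hε0 (mem_Ioi.mpr one_pos) hε1
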